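/- Let d be a positive integer, X a finite set, {ψ_x}_{x∈X} unit vectors in ℂ^d, and w : X → ℝ_{≥0} weights such that ∑_{x∈X} d·w_x·|ψ_x⟩⟨ψ_x| = I_d (so that {d·w_x|ψ_x⟩⟨ψ_x|} is a POVM). Let O ∈ ℂ^{d×d} be Hermitian with Tr(O) = 0 and let ε > 0 satisfy 3ε·‖O‖_op ≤ 1. Define p(x) := w_x and q(x) := w_x·(1 + 3ε·⟨ψ_x|O|ψ_x⟩). Then: (i) p and q are probability distributions on X; (ii) χ²(q‖p) = 9ε²·∑_{x∈X} w_x·⟨ψ_x|O|ψ_x⟩²; and (iii) TV(q, p) ≤ (3ε/√2)·√(∑_{x∈X} w_x·⟨ψ_x|O|ψ_x⟩²). -/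

import Mathlib

open Matrix

noncomputable section

/-- `⟨v|A|v⟩ = v† A v`. -/
def qexp {d : ℕ} (A : Matrix (Fin d) (Fin d) ℂ) (v : Fin d → ℂ) : ℂ :=
  star v ⬝ᵥ A.mulVec v

/-- Squared ℓ²-norm of a vector of `ℂ^d`. -/
def norm2 {d : ℕ} (v : Fin d → ℂ) : ℝ := ∑ i, Complex.normSq (v i)

/-- Operator (spectral) norm of a matrix, via its action on Euclidean space. -/
def opNorm {d : ℕ} (A : Matrix (Fin d) (Fin d) ℂ) : ℝ :=
  ‖Matrix.toEuclideanCLM (𝕜 := ℂ) A‖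

/-- Outcome distributions of a POVM `{d·w_x·|ψ_x⟩⟨ψ_x|}` on the maximally mixed state
(`p`) and on the perturbed state `(I + 3εO)/d` (`q`): both are probability distributions,
their chi-square divergence is `9ε²·∑ₓ wₓ⟨ψₓ|O|ψₓ⟩²`, and their total variation distance
is at most `(3ε/√2)·√(∑ₓ wₓ⟨ψₓ|O|ψₓ⟩²)`. -/
lemma trace_mul_vecMulVec {d : ℕ} (O : Matrix (Fin d) (Fin d) ℂ) (v : Fin d → ℂ) :
    (O * Matrix.vecMulVec v (star v)).trace = qexp O v := by
  simp only [Matrix.trace, Matrix.diag, Matrix.mul_apply, Matrix.vecMulVec_apply,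
    qexp, dotProduct, Matrix.mulVec, Pi.star_apply, Finset.mul_sum]
  exact Finset.sum_congr rfl fun i _ => Finset.sum_congr rfl fun j _ => by ring

lemma trace_vecMulVec' {d : ℕ} (v : Fin d → ℂ) :
    (Matrix.vecMulVec v (star v)).trace = (norm2 v : ℂ) := by
  simp only [Matrix.trace, Matrix.diag, Matrix.vecMulVec_apply, Pi.star_apply, norm2]
  push_cast
  exact Finset.sum_congr rfl fun i _ => (Complex.mul_conj (v i))

lemma qexp_re_le_opNorm {d : ℕ} (O : Matrix (Fin d) (Fin d) ℂ) (v : Fin d → ℂ)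
    (hv : norm2 v = 1) : |(qexp O v).re| ≤ opNorm O := by
  set v' : EuclideanSpace ℂ (Fin d) := (WithLp.equiv 2 _).symm v
  have hnorm : ‖v'‖ = 1 := by
    rw [EuclideanSpace.norm_eq]
    have : ∑ i, ‖v i‖ ^ 2 = 1 := by
      rw [← hv, norm2]
      exact Finset.sum_congr rfl fun i _ => Complex.sq_norm (v i)
    simp only [v', WithLp.equiv_symm_apply, WithLp.ofLp_toLp]
    rw [this, Real.sqrt_one]
  have hinner : qexp O v = inner ℂ v' ((Matrix.toEuclideanCLM (𝕜 := ℂ) O) v') := by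
    simp only [v', WithLp.equiv_symm_apply]
    rw [Matrix.toEuclideanCLM_toLp]
    simp [qexp, dotProduct, PiLp.inner_apply, mul_comm]
  calc |(qexp O v).re| ≤ ‖qexp O v‖ := Complex.abs_re_le_norm _
    _ = ‖inner ℂ v' ((Matrix.toEuclideanCLM (𝕜 := ℂ) O) v')‖ := by rw [hinner]
    _ ≤ ‖v'‖ * ‖(Matrix.toEuclideanCLM (𝕜 := ℂ) O) v'‖ := norm_inner_le_norm _ _
    _ ≤ ‖v'‖ * (opNorm O * ‖v'‖) := by
        gcongr
        exact (Matrix.toEuclideanCLM (𝕜 := ℂ) O).le_opNorm v'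
    _ = opNorm O := by rw [hnorm]; ring

theorem povm_perturbation_divergences (d : ℕ) (hd : 0 < d)
    (X : Type) [Fintype X]
    (ψ : X → (Fin d → ℂ)) (hψ : ∀ x, norm2 (ψ x) = 1)
    (w : X → ℝ) (hw : ∀ x, 0 ≤ w x)
    (hPOVM : ∑ x : X, (((d : ℝ) * w x : ℝ) : ℂ) • Matrix.vecMulVec (ψ x) (star (ψ x))
      = (1 : Matrix (Fin d) (Fin d) ℂ))
    (O : Matrix (Fin d) (Fin d) ℂ) (hO : O.IsHermitian) (hOtr : O.trace = 0)
    (ε : ℝ) (hε : 0 < ε) (hεO : 3 * ε * opNorm O ≤ 1) :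
    -- (i) `p` and `q` are probability distributions on `X`
    ((∀ x, 0 ≤ w x) ∧ ∑ x : X, w x = 1) ∧
    ((∀ x, 0 ≤ w x * (1 + 3 * ε * (qexp O (ψ x)).re)) ∧
      ∑ x : X, w x * (1 + 3 * ε * (qexp O (ψ x)).re) = 1) ∧
    -- (ii) chi-square divergence
    (∑ x ∈ Finset.univ.filter (fun x : X => 0 < w x),
        (w x * (1 + 3 * ε * (qexp O (ψ x)).re) - w x) ^ 2 / w x
      = 9 * ε ^ 2 * ∑ x : X, w x * ((qexp O (ψ x)).re) ^ 2) ∧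
    -- (iii) total variation distance
    ((1 / 2) * ∑ x : X, |w x * (1 + 3 * ε * (qexp O (ψ x)).re) - w x|
      ≤ (3 * ε / Real.sqrt 2) *
          Real.sqrt (∑ x : X, w x * ((qexp O (ψ x)).re) ^ 2)) := by
  set r : X → ℝ := fun x => (qexp O (ψ x)).re with hr
  -- sum of w = 1
  have hsum : ∑ x : X, w x = 1 := by
    have h1 := congrArg Matrix.trace hPOVM
    simp only [Matrix.trace_sum, Matrix.trace_smul, trace_vecMulVec', hψ, Matrix.trace_one,
      Complex.ofReal_one, smul_eq_mul, mul_one] at h1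
    rw [Fintype.card_fin] at h1
    have h2 : ∑ x : X, (d : ℝ) * w x = (d : ℝ) := by exact_mod_cast h1
    rw [← Finset.mul_sum] at h2
    have hd' : (d : ℝ) ≠ 0 := by positivity
    exact mul_left_cancel₀ hd' (h2.trans (mul_one (d:ℝ)).symm)
  -- zero mean
  have hmean : ∑ x : X, w x * r x = 0 := by
    have h1 := congrArg (fun M => (O * M).trace) hPOVM
    simp only [Matrix.mul_sum, Matrix.mul_smul, Matrix.trace_sum, Matrix.trace_smul,
      trace_mul_vecMulVec, mul_one, smul_eq_mul] at h1
    rw [hOtr] at h1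
    have h2 := congrArg Complex.re h1
    simp only [Complex.re_sum, Complex.zero_re, Complex.mul_re, Complex.ofReal_re,
      Complex.ofReal_im, zero_mul, sub_zero] at h2
    have h3 : (d : ℝ) * ∑ x : X, w x * r x = 0 := by
      rw [Finset.mul_sum, ← h2]
      exact Finset.sum_congr rfl fun x _ => by rw [hr]; ring
    have hd' : (d : ℝ) ≠ 0 := by positivity
    exact (mul_eq_zero.mp h3).resolve_left hd'
  have hbd : ∀ x, |r x| ≤ opNorm O := fun x => qexp_re_le_opNorm O (ψ x) (hψ x)
  have hqnn : ∀ x, 0 ≤ w x * (1 + 3 * ε * r x) := by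
    intro x
    apply mul_nonneg (hw x)
    have h1 : 3 * ε * r x ≥ -(3 * ε * opNorm O) := by
      have := neg_abs_le (r x)
      nlinarith [hbd x, abs_nonneg (r x)]
    linarith
  have hqsum : ∑ x : X, w x * (1 + 3 * ε * r x) = 1 := by
    have : ∑ x : X, w x * (1 + 3 * ε * r x)
        = (∑ x : X, w x) + 3 * ε * ∑ x : X, w x * r x := by
      rw [Finset.mul_sum, ← Finset.sum_add_distrib]
      exact Finset.sum_congr rfl fun x _ => by ring
    rw [this, hsum, hmean]; ring
  -- chi square
  have hchi : ∑ x ∈ Finset.univ.filter (fun x : X => 0 < w x),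
        (w x * (1 + 3 * ε * r x) - w x) ^ 2 / w x
      = 9 * ε ^ 2 * ∑ x : X, w x * (r x) ^ 2 := by
    have h1 : ∑ x : X, w x * (r x) ^ 2
        = ∑ x ∈ Finset.univ.filter (fun x : X => 0 < w x), w x * (r x) ^ 2 := by
      refine (Finset.sum_filter_of_ne fun x _ hne => ?_).symm
      rcases lt_or_eq_of_le (hw x) with h | h
      · exact h
      · exact absurd (by rw [← h, zero_mul]) hne
    rw [h1, Finset.mul_sum]
    refine Finset.sum_congr rfl fun x hx => ?_
    have hx' : 0 < w x := (Finset.mem_filter.mp hx).2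
    field_simp
    ring
  -- TV
  have habs : ∀ x, |w x * (1 + 3 * ε * r x) - w x| = 3 * ε * (w x * |r x|) := by
    intro x
    have : w x * (1 + 3 * ε * r x) - w x = 3 * ε * (w x * r x) := by ring
    rw [this]
    simp only [abs_mul, abs_of_nonneg (hw x), abs_of_nonneg hε.le,
      abs_of_nonneg (by norm_num : (0:ℝ) ≤ 3)]
  set S : ℝ := ∑ x : X, w x * (r x) ^ 2 with hS
  have hSnn : 0 ≤ S := Finset.sum_nonneg fun x _ => mul_nonneg (hw x) (sq_nonneg _)
  have hCS : ∑ x : X, w x * |r x| ≤ Real.sqrt S := by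
    have h1 : (∑ x : X, w x * |r x|) ^ 2 ≤ S := by
      have h2 := Finset.sum_mul_sq_le_sq_mul_sq Finset.univ
        (fun x => Real.sqrt (w x)) (fun x => Real.sqrt (w x) * |r x|)
      have h3 : ∀ x : X, Real.sqrt (w x) * (Real.sqrt (w x) * |r x|) = w x * |r x| := by
        intro x
        rw [← mul_assoc, Real.mul_self_sqrt (hw x)]
      have h4 : ∀ x : X, Real.sqrt (w x) ^ 2 = w x := fun x => Real.sq_sqrt (hw x)
      have h5 : ∀ x : X, (Real.sqrt (w x) * |r x|) ^ 2 = w x * (r x) ^ 2 := by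
        intro x
        rw [mul_pow, Real.sq_sqrt (hw x), sq_abs]
      simp only [h3, h4, h5] at h2
      rw [hsum, one_mul] at h2
      exact h2
    have hnn : 0 ≤ ∑ x : X, w x * |r x| :=
      Finset.sum_nonneg fun x _ => mul_nonneg (hw x) (abs_nonneg _)
    exact (Real.le_sqrt hnn hSnn).mpr h1
  have hTV : (1 / 2) * ∑ x : X, |w x * (1 + 3 * ε * r x) - w x|
      ≤ (3 * ε / Real.sqrt 2) * Real.sqrt S := by
    have h1 : ∑ x : X, |w x * (1 + 3 * ε * r x) - w x| = 3 * ε * ∑ x : X, w x * |r x| := by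
      rw [Finset.mul_sum]
      exact Finset.sum_congr rfl fun x _ => habs x
    rw [h1]
    have hs2 : Real.sqrt 2 ≤ 2 := by
      nlinarith [Real.sq_sqrt (by norm_num : (0:ℝ) ≤ 2), Real.sqrt_nonneg 2]
    have hs2' : 0 < Real.sqrt 2 := Real.sqrt_pos.mpr (by norm_num)
    have step : (1/2) * (3 * ε * ∑ x : X, w x * |r x|) ≤ (1/2) * (3 * ε * Real.sqrt S) := by
      nlinarith [hCS, hε.le]
    refine step.trans ?_
    have heq : 3 * ε / Real.sqrt 2 * Real.sqrt S = 3 * ε * Real.sqrt S / Real.sqrt 2 := by ring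
    rw [heq, le_div_iff₀ hs2']
    nlinarith [mul_nonneg (by positivity : (0:ℝ) ≤ 3 * ε) (Real.sqrt_nonneg S), hs2]
  exact ⟨⟨hw, hsum⟩, ⟨hqnn, hqsum⟩, hchi, hTV⟩

end
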